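/- Let N ≥ 1 and let β ∈ ℕ^N be a nonzero multi-index. Then ∑_{0 ≤ γ ≤ β} (β!/(γ!·(β−γ)!))·γ^{γ̃}·(β−γ)^{(β−γ)̃} ≤ 4^N·β^{β̃}, where the sum ranges over all multi-indices γ with 0 ≤ γ_i ≤ β_i for each i, α! = ∏_i α_i!, α^δ = ∏_i α_i^{δ_i} (with the convention 0⁰ = 1), and for a multi-index α, α̃ denotes the multi-index with entries max{α_i − 1, 0}. -/

import Mathlib

/-!
The sum factorizes over the coordinates, so it suffices to show, for `n : ℕ`,
`S(n) = ∑_{k ≤ n} C(n,k) k^(k-1) (n-k)^(n-k-1) ≤ 4 n^(n-1)`.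
Writing `n = k + (n - k)` and using the symmetry `k ↔ n - k`, `n S(n)` is at most twice
`∑_{k ≤ n} C(n,k) k^(k-1) (n-k)^(n-k) = n^n + n^n`; the second `n^n` is the case `y = n` of
`∑_{k=1}^n C(n,k) k^(k-1) (y-k)^(n-k) = n y^(n-1)`, the derivative at `x = 0` of Abel's identity.
Expanding `(y - k)^(n-k)` reduces it to the vanishing of `n`-th finite differences of
polynomials of degree `< n`.
-/

open Finset

theorem Nat.choose_mul_choose_sub_comm (n k j : ℕ) :
    n.choose k * (n - k).choose j = n.choose j * (n - j).choose k := by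
  rcases le_or_gt (k + j) n with h | h
  · have hk := Nat.choose_mul (n := n) (Nat.le_add_right k j)
    have hj := Nat.choose_mul (n := n) (Nat.le_add_left j k)
    rw [Nat.choose_symm_add, Nat.add_sub_cancel_left] at hk
    rw [Nat.add_sub_cancel] at hj
    rw [← hk, hj]
  · have vanish : ∀ a b, n < a + b → n.choose a * (n - a).choose b = 0 := fun a b hab => by
      rcases le_or_gt a n with ha | ha
      · rw [Nat.choose_eq_zero_of_lt (by omega : n - a < b), mul_zero]
      · rw [Nat.choose_eq_zero_of_lt ha, zero_mul]
    rw [vanish k j h, vanish j k (by omega)]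

theorem sum_Icc_alternating_choose_mul_pow_pred {R : Type*} [CommRing R] {m : ℕ} (hm : 1 ≤ m) :
    ∑ k ∈ Icc 1 m, (-1 : R) ^ (m - k) * m.choose k * (k : R) ^ (m - 1) =
      if m = 1 then 1 else 0 := by
  have h := congrFun (fwdDiff_iter_pow_eq_zero_of_lt (R := R) (Nat.sub_lt hm one_pos)) 0
  rw [fwdDiff_iter_eq_sum_shift, range_eq_Ico, sum_eq_sum_Ico_succ_bot (by omega), zero_add,
    Ico_add_one_right_eq_Icc] at h
  simp only [zsmul_eq_mul, zero_add, nsmul_eq_mul, mul_one, Int.cast_mul, Int.cast_pow,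
    Int.cast_neg, Int.cast_one, Int.cast_natCast, Nat.cast_zero, Pi.zero_apply] at h
  rw [eq_neg_of_add_eq_zero_right h]
  rcases eq_or_lt_of_le hm with rfl | hm
  · simp
  · simp [zero_pow (by omega : m - 1 ≠ 0), hm.ne']

theorem sum_Icc_choose_mul_pow_pred_mul_sub_pow {R : Type*} [CommRing R] (n : ℕ) (y : R) :
    ∑ k ∈ Icc 1 n, n.choose k * (k : R) ^ (k - 1) * (y - k) ^ (n - k) = n * y ^ (n - 1) := by
  have expand : ∀ k ∈ Icc 1 n, ∀ j ∈ range (n - k + 1),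
      n.choose k * (k : R) ^ (k - 1) * (y ^ j * (-k : R) ^ (n - k - j) * (n - k).choose j) =
        n.choose j * y ^ j * ((-1) ^ (n - j - k) * (n - j).choose k * (k : R) ^ (n - j - 1)) := by
    intro k hk j hj
    rw [mem_Icc] at hk
    rw [mem_range] at hj
    have hchoose : (n.choose k * (n - k).choose j : R) = n.choose j * (n - j).choose k := by
      rw [← Nat.cast_mul, ← Nat.cast_mul, Nat.choose_mul_choose_sub_comm]
    have hpow : (k : R) ^ (k - 1) * (k : R) ^ (n - k - j) = (k : R) ^ (n - j - 1) := by
      rw [← pow_add]; congr 1; omega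
    rw [neg_pow, show n - j - k = n - k - j by omega, ← hpow]
    linear_combination
      (y ^ j * (-1) ^ (n - k - j) * (k : R) ^ (k - 1) * (k : R) ^ (n - k - j)) * hchoose
  calc ∑ k ∈ Icc 1 n, n.choose k * (k : R) ^ (k - 1) * (y - k) ^ (n - k)
      = ∑ k ∈ Icc 1 n, ∑ j ∈ range (n - k + 1), n.choose j * y ^ j *
          ((-1) ^ (n - j - k) * (n - j).choose k * (k : R) ^ (n - j - 1)) := by
        refine sum_congr rfl fun k hk => ?_
        rw [sub_eq_add_neg, add_pow, mul_sum]
        exact sum_congr rfl (expand k hk)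
    _ = ∑ j ∈ range n, ∑ k ∈ Icc 1 (n - j), n.choose j * y ^ j *
          ((-1) ^ (n - j - k) * (n - j).choose k * (k : R) ^ (n - j - 1)) :=
        sum_comm' fun k j => by simp only [mem_Icc, mem_range]; omega
    _ = ∑ j ∈ range n, n.choose j * y ^ j * if n - j = 1 then 1 else 0 := by
        refine sum_congr rfl fun j hj => ?_
        rw [← mul_sum, sum_Icc_alternating_choose_mul_pow_pred (by simp at hj; omega)]
    _ = n * y ^ (n - 1) := by
        rcases n with _ | m
        · simp
        · rw [sum_eq_single m (fun j hj hjm => by rw [if_neg (by simp at hj; omega), mul_zero])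
            (by simp)]
          simp [Nat.choose_succ_self_right]

theorem Nat.sum_Icc_choose_mul_pow_pred_mul_pow_self (n : ℕ) :
    ∑ k ∈ Icc 1 n, n.choose k * k ^ (k - 1) * (n - k) ^ (n - k) = n * n ^ (n - 1) := by
  apply Nat.cast_injective (R := ℤ)
  push_cast
  rw [← sum_Icc_choose_mul_pow_pred_mul_sub_pow]
  refine sum_congr rfl fun k hk => ?_
  rw [Nat.cast_sub (mem_Icc.mp hk).2]

theorem Nat.mul_pow_pred_le_pow_self (m : ℕ) : m * m ^ (m - 1) ≤ m ^ m := by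
  rcases m with _ | m
  · simp
  · rw [mul_pow_sub_one m.succ_ne_zero]

theorem Nat.sum_Iic_choose_mul_pow_pred_mul_pow_pred_le (n : ℕ) :
    ∑ k ∈ Iic n, n.choose k * k ^ (k - 1) * (n - k) ^ (n - k - 1) ≤ 4 * n ^ (n - 1) := by
  rcases Nat.eq_zero_or_pos n with rfl | hn
  · decide
  refine Nat.le_of_mul_le_mul_left ?_ hn
  have reflect : ∑ k ∈ Iic n, n.choose k * (k * k ^ (k - 1)) * (n - k) ^ (n - k - 1) =
      ∑ k ∈ Iic n, n.choose k * k ^ (k - 1) * ((n - k) * (n - k) ^ (n - k - 1)) := by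
    rw [← Nat.range_succ_eq_Iic, ← sum_range_reflect]
    refine sum_congr rfl fun k hk => ?_
    have hk : k ≤ n := Nat.lt_succ_iff.mp (mem_range.mp hk)
    rw [Nat.add_sub_cancel, Nat.choose_symm hk, Nat.sub_sub_self hk]
    ring
  have split : ∑ k ∈ Iic n, n.choose k * k ^ (k - 1) * (n - k) ^ (n - k) =
      n ^ n + n * n ^ (n - 1) := by
    rw [Iic_eq_Icc, Nat.bot_eq_zero, ← sum_Ioc_add_eq_sum_Icc n.zero_le,
      ← Icc_add_one_left_eq_Ioc, zero_add, Nat.sum_Icc_choose_mul_pow_pred_mul_pow_self]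
    simp [add_comm]
  calc n * ∑ k ∈ Iic n, n.choose k * k ^ (k - 1) * (n - k) ^ (n - k - 1)
      = ∑ k ∈ Iic n, n.choose k * (k * k ^ (k - 1)) * (n - k) ^ (n - k - 1) +
          ∑ k ∈ Iic n, n.choose k * k ^ (k - 1) * ((n - k) * (n - k) ^ (n - k - 1)) := by
        rw [mul_sum, ← sum_add_distrib]
        refine sum_congr rfl fun k hk => ?_
        nth_rw 1 [← Nat.add_sub_cancel' (mem_Iic.mp hk)]
        ring
    _ = 2 * ∑ k ∈ Iic n, n.choose k * k ^ (k - 1) * ((n - k) * (n - k) ^ (n - k - 1)) := by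
        rw [reflect, two_mul]
    _ ≤ 2 * ∑ k ∈ Iic n, n.choose k * k ^ (k - 1) * (n - k) ^ (n - k) := by
        gcongr with k
        exact Nat.mul_pow_pred_le_pow_self _
    _ = n * (4 * n ^ (n - 1)) := by
        rw [split, ← mul_pow_sub_one hn.ne' n]
        ring

theorem prod_cast_choose {ι K : Type*} [Field K] [CharZero K] (s : Finset ι) {β γ : ι → ℕ}
    (hγ : ∀ i ∈ s, γ i ≤ β i) :
    ∏ i ∈ s, ((β i).choose (γ i) : K) =
      (∏ i ∈ s, ((β i).factorial : K)) /
        ((∏ i ∈ s, ((γ i).factorial : K)) * ∏ i ∈ s, ((β i - γ i).factorial : K)) := by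
  rw [← prod_mul_distrib, ← prod_div_distrib]
  exact prod_congr rfl fun i hi => Nat.cast_choose K (hγ i hi)

theorem multiindex_abel_inequality_general (N : ℕ)
    (β : Fin N → ℕ) :
    ∑ γ ∈ Fintype.piFinset (fun i => Finset.Iic (β i)),
        ((∏ i, Nat.factorial (β i) : ℝ) /
            ((∏ i, Nat.factorial (γ i) : ℝ) * (∏ i, Nat.factorial (β i - γ i) : ℝ))) *
          (∏ i, ((γ i : ℝ)) ^ (γ i - 1)) *
          (∏ i, (((β i - γ i : ℕ) : ℝ)) ^ (β i - γ i - 1)) ≤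
      4 ^ N * ∏ i, ((β i : ℝ)) ^ (β i - 1) := by
  calc _ = ∑ γ ∈ Fintype.piFinset (fun i => Iic (β i)), ∏ i,
          (((β i).choose (γ i) * γ i ^ (γ i - 1) * (β i - γ i) ^ (β i - γ i - 1) : ℕ) : ℝ) := by
        refine sum_congr rfl fun γ hγ => ?_
        have hγβ : ∀ i ∈ univ, γ i ≤ β i := fun i _ => mem_Iic.mp (Fintype.mem_piFinset.mp hγ i)
        simp only [Nat.cast_mul, Nat.cast_pow, prod_mul_distrib, prod_cast_choose univ hγβ]
    _ = ∏ i, ∑ k ∈ Iic (β i),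
          (((β i).choose k * k ^ (k - 1) * (β i - k) ^ (β i - k - 1) : ℕ) : ℝ) := by
        rw [prod_univ_sum]
    _ ≤ ∏ i : Fin N, 4 * (β i : ℝ) ^ (β i - 1) := by
        refine prod_le_prod (fun i _ => by positivity) fun i _ => ?_
        rw [← Nat.cast_sum]
        exact_mod_cast Nat.sum_Iic_choose_mul_pow_pred_mul_pow_pred_le (β i)
    _ = 4 ^ N * ∏ i, (β i : ℝ) ^ (β i - 1) := by
        rw [prod_mul_distrib, prod_const, card_univ, Fintype.card_fin]

/-- Lemma `bauges`: for a nonzero multi-index `β ∈ ℕ^N`,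
`∑_{0 ≤ γ ≤ β} (β! / (γ! (β-γ)!)) γ^{γ̃} (β-γ)^{(β-γ)̃} ≤ 4^N β^{β̃}`,
where `α! = ∏ᵢ αᵢ!`, `α^δ = ∏ᵢ αᵢ^{δᵢ}` (with `0⁰ = 1`) and
`α̃ᵢ = max {αᵢ - 1, 0}` (truncated subtraction on `ℕ`). -/
theorem multiindex_abel_inequality (N : ℕ) (hN : 1 ≤ N)
    (β : Fin N → ℕ) (hβ : β ≠ 0) :
    ∑ γ ∈ Fintype.piFinset (fun i => Finset.Iic (β i)),
        ((∏ i, Nat.factorial (β i) : ℝ) /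
            ((∏ i, Nat.factorial (γ i) : ℝ) * (∏ i, Nat.factorial (β i - γ i) : ℝ))) *
          (∏ i, ((γ i : ℝ)) ^ (γ i - 1)) *
          (∏ i, (((β i - γ i : ℕ) : ℝ)) ^ (β i - γ i - 1)) ≤
      4 ^ N * ∏ i, ((β i : ℝ)) ^ (β i - 1) :=
  multiindex_abel_inequality_general N β
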